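/- Complexification I ↦ I ⊕ iI is a bijection from the set of ideals of D_n to the set of ideals of M_n, with inverse I_M ↦ {η ∈ I_M : η^Λ = η}, and it preserves intersections: (I₁ ∩ I₂) ⊕ i(I₁ ∩ I₂) = (I₁ ⊕ iI₁) ∩ (I₂ ⊕ iI₂). -/
import Mathlib


/-- Inclusion of the multiperplex ring `D_n ≅ ℝ^N` into the multicomplex ring `M_n ≅ ℂ^N`. -/
def cx (N : ℕ) (d : Fin N → ℝ) : Fin N → ℂ := fun k => (d k : ℂ)

/-- The complexification `S ⊕ i S = {d₁ + i d₂ : d₁, d₂ ∈ S}` of a set `S ⊆ D_n`. -/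
def Cplx (N : ℕ) (S : Set (Fin N → ℝ)) : Set (Fin N → ℂ) :=
  {η | ∃ d₁ ∈ S, ∃ d₂ ∈ S, η = cx N d₁ + fun k => Complex.I * (d₂ k : ℂ)}

lemma mem_Cplx {N : ℕ} (S : Set (Fin N → ℝ)) (η : Fin N → ℂ) :
    η ∈ Cplx N S ↔ (fun k => (η k).re) ∈ S ∧ (fun k => (η k).im) ∈ S := by
  constructor
  · rintro ⟨d₁, h1, d₂, h2, rfl⟩
    constructor
    · have : (fun k => ((cx N d₁ + fun k => Complex.I * (d₂ k : ℂ)) k).re) = d₁ := by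
        funext k; simp [cx]
      rwa [this]
    · have : (fun k => ((cx N d₁ + fun k => Complex.I * (d₂ k : ℂ)) k).im) = d₂ := by
        funext k; simp [cx]
      rwa [this]
  · rintro ⟨h1, h2⟩
    refine ⟨_, h1, _, h2, funext fun k => ?_⟩
    simp [cx, mul_comm, Complex.re_add_im]
    rw [mul_comm]
    exact (Complex.re_add_im (η k)).symm

lemma mem_of_vanishing {N : ℕ} (IM : Ideal (Fin N → ℂ)) {η : Fin N → ℂ} (hη : η ∈ IM)
    (f : Fin N → ℂ) (hf : ∀ k, η k = 0 → f k = 0) : f ∈ IM := by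
  have hsum : f = ∑ k, Pi.single k (f k) := (Finset.univ_sum_single f).symm
  rw [hsum]
  refine Ideal.sum_mem _ fun k _ => ?_
  by_cases h : η k = 0
  · rw [hf k h]; simp
  · have key : Pi.single k (f k) = Pi.single k (f k / η k) * η := by
      funext j
      by_cases hj : j = k
      · subst hj; simp [div_mul_cancel₀ _ h]
      · simp [Pi.single_eq_of_ne hj]
    rw [key]
    exact IM.mul_mem_left _ hη

/-- Complexification `I ↦ I ⊕ iI` is a bijection from ideals of `D_n` to
ideals of `M_n`, with inverse `I_M ↦ {η ∈ I_M : η^Λ = η}` (realized in `D_n` as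
`cx⁻¹(I_M)`), and it preserves intersections. -/
theorem stmt16 (n : ℕ) (hn : 2 ≤ n) :
    (∀ I : Ideal (Fin (2 ^ (n - 1)) → ℝ),
      ∃ IM : Ideal (Fin (2 ^ (n - 1)) → ℂ), (IM : Set _) = Cplx (2 ^ (n - 1)) I) ∧
    (∀ I : Ideal (Fin (2 ^ (n - 1)) → ℝ),
      cx (2 ^ (n - 1)) ⁻¹' Cplx (2 ^ (n - 1)) I = (I : Set _)) ∧
    (∀ IM : Ideal (Fin (2 ^ (n - 1)) → ℂ),
      Cplx (2 ^ (n - 1)) (cx (2 ^ (n - 1)) ⁻¹' (IM : Set _)) = (IM : Set _)) ∧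
    (∀ I₁ I₂ : Ideal (Fin (2 ^ (n - 1)) → ℝ),
      Cplx (2 ^ (n - 1)) ((I₁ ⊓ I₂ : Ideal _) : Set _) =
        Cplx (2 ^ (n - 1)) I₁ ∩ Cplx (2 ^ (n - 1)) I₂) := by
  set N := 2 ^ (n - 1) with hN
  refine ⟨?_, ?_, ?_, ?_⟩
  · -- Cplx I is an ideal
    intro I
    refine ⟨{ carrier := Cplx N I, zero_mem' := ?_, add_mem' := ?_, smul_mem' := ?_ }, rfl⟩
    · intro a b ha hb
      rw [mem_Cplx] at ha hb ⊢
      constructor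
      · have : (fun k => ((a + b) k).re) =
            (fun k => (a k).re) + fun k => (b k).re := by funext k; simp
        rw [this]; exact I.add_mem ha.1 hb.1
      · have : (fun k => ((a + b) k).im) =
            (fun k => (a k).im) + fun k => (b k).im := by funext k; simp
        rw [this]; exact I.add_mem ha.2 hb.2
    · show (0 : Fin N → ℂ) ∈ Cplx N (I : Set _)
      rw [mem_Cplx]
      have h0 : (fun k => ((0 : Fin N → ℂ) k).re) = (0 : Fin N → ℝ) := by funext k; simp
      have h0' : (fun k => ((0 : Fin N → ℂ) k).im) = (0 : Fin N → ℝ) := by funext k; simp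
      rw [h0, h0']
      exact ⟨I.zero_mem, I.zero_mem⟩
    · intro c x hx
      rw [mem_Cplx] at hx ⊢
      constructor
      · have : (fun k => ((c • x) k).re) =
            (fun k => (c k).re) * (fun k => (x k).re) -
            (fun k => (c k).im) * fun k => (x k).im := by
          funext k; simp [Complex.mul_re]
        rw [this]
        exact I.sub_mem (I.mul_mem_left _ hx.1) (I.mul_mem_left _ hx.2)
      · have : (fun k => ((c • x) k).im) =
            (fun k => (c k).re) * (fun k => (x k).im) +
            (fun k => (c k).im) * fun k => (x k).re := by
          funext k; simp [Complex.mul_im]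
        rw [this]
        exact I.add_mem (I.mul_mem_left _ hx.2) (I.mul_mem_left _ hx.1)
  · -- left inverse
    intro I
    ext d
    simp only [Set.mem_preimage, mem_Cplx, SetLike.mem_coe]
    constructor
    · rintro ⟨h1, h2⟩
      have : (fun k => ((cx N d) k).re) = d := by funext k; simp [cx]
      rwa [this] at h1
    · intro hd
      constructor
      · have : (fun k => ((cx N d) k).re) = d := by funext k; simp [cx]
        rwa [this]
      · have : (fun k => ((cx N d) k).im) = (0 : Fin N → ℝ) := by funext k; simp [cx]
        rw [this]; exact I.zero_mem
  · -- right inverse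
    intro IM
    ext η
    rw [mem_Cplx]
    simp only [Set.mem_preimage, SetLike.mem_coe]
    constructor
    · rintro ⟨h1, h2⟩
      have hη : η = cx N (fun k => (η k).re) +
          (fun _ => Complex.I) * cx N (fun k => (η k).im) := by
        funext k; simp [cx]
        rw [mul_comm]
        exact (Complex.re_add_im (η k)).symm
      rw [hη]
      exact IM.add_mem h1 (IM.mul_mem_left _ h2)
    · intro hη
      constructor
      · refine mem_of_vanishing IM hη _ fun k hk => ?_
        simp [cx, hk]
      · refine mem_of_vanishing IM hη _ fun k hk => ?_
        simp [cx, hk]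
  · -- intersections
    intro I₁ I₂
    ext η
    simp only [Set.mem_inter_iff, mem_Cplx, SetLike.mem_coe, Submodule.mem_inf]
    tauto
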